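/- arXiv:0711.4730 — 4 statements merged into one kernel-verified Lean document; each statement's English description precedes it below -/
import Mathlib

section
/- Let S/R be an integral extension of Noetherian integral domains with R normal. For every proper ideal I of R, the height of I in R equals the height of the extension ideal SI in S. -/
/-!
Over a normal domain an integral extension of domains satisfies going down, and it satisfies
incomparability. Hence contraction `Spec S → Spec R` is strictly monotone and lifts every chain
of primes ending at the contraction of `Q` to a chain ending at `Q`, so it preserves heights of
primes. By lying over it is also surjective, and a prime `Q` contains `I S` exactly when its
contraction contains `I`; taking infima gives `ht (I S) = ht I`.
-/

/-- The height of an ideal: the infimum of the heights of the prime ideals containing it. -/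
noncomputable def idealHeight {R : Type*} [CommRing R] (I : Ideal R) : ℕ∞ :=
  ⨅ (p : PrimeSpectrum R) (_ : I ≤ p.asIdeal), Order.height p

namespace PrimeSpectrum

variable {R S : Type*} [CommRing R] [CommRing S] [Algebra R S] [Algebra.IsIntegral R S]

theorem comap_strictMono_of_isIntegral : StrictMono (comap (algebraMap R S)) :=
  fun _ _ h ↦ Ideal.IsIntegral.comap_lt_comap (R := R) h

theorem comap_surjective_of_isIntegral [FaithfulSMul R S] :
    Function.Surjective (comap (algebraMap R S)) := by
  intro p
  obtain ⟨Q, -, hQ, hQp⟩ := Ideal.exists_ideal_over_prime_of_isIntegral p.asIdeal (⊥ : Ideal S)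
    (by simp [← RingHom.ker_eq_comap_bot])
  exact ⟨⟨Q, hQ⟩, PrimeSpectrum.ext hQp⟩

theorem height_comap_of_hasGoingDown [Algebra.HasGoingDown R S] (Q : PrimeSpectrum S) :
    Order.height (comap (algebraMap R S) Q) = Order.height Q := by
  refine (Order.height_eq_of_strictMono _ comap_strictMono_of_isIntegral (fun Q p hp ↦ ?_) Q).symm
  have : Q.asIdeal.LiesOver (comap (algebraMap R S) Q).asIdeal := ⟨rfl⟩
  obtain ⟨P, hPQ, hP, hPp⟩ := Ideal.exists_ideal_lt_liesOver_of_lt Q.asIdeal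
    (p := p.asIdeal) ((asIdeal_lt_asIdeal _ _).mpr hp)
  exact ⟨⟨P, hP⟩, hPQ, PrimeSpectrum.ext hPp.over.symm⟩

end PrimeSpectrum

theorem idealHeight_map_of_hasGoingDown {R S : Type*} [CommRing R] [CommRing S] [Algebra R S]
    [Algebra.IsIntegral R S] [Algebra.HasGoingDown R S] [FaithfulSMul R S] (I : Ideal R) :
    idealHeight (I.map (algebraMap R S)) = idealHeight I := by
  simp only [idealHeight, Ideal.map_le_iff_le_comap]
  rw [← (PrimeSpectrum.comap_surjective_of_isIntegral (S := S)).iInf_comp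
    (fun p ↦ ⨅ (_ : I ≤ p.asIdeal), Order.height p)]
  simp only [PrimeSpectrum.comap_asIdeal, PrimeSpectrum.height_comap_of_hasGoingDown]

theorem statement0_general {R S : Type*} [CommRing R] [CommRing S] [IsDomain S]
    [Algebra R S]
    (hinj : Function.Injective (algebraMap R S))
    [Algebra.IsIntegral R S] [IsIntegrallyClosed R]
    (I : Ideal R) :
    idealHeight I = idealHeight (I.map (algebraMap R S)) := by
  have : FaithfulSMul R S := (faithfulSMul_iff_algebraMap_injective R S).mpr hinj
  exact (idealHeight_map_of_hasGoingDown I).symm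

/-- Let `S/R` be an integral extension of Noetherian integral domains with `R` normal
(integrally closed).  Then for every proper ideal `I` of `R`, the height of `I` in `R`
equals the height of the extension ideal `S·I` in `S`. -/
theorem statement0 {R S : Type*} [CommRing R] [CommRing S] [IsDomain R] [IsDomain S]
    [IsNoetherianRing R] [IsNoetherianRing S] [Algebra R S]
    (hinj : Function.Injective (algebraMap R S))
    [Algebra.IsIntegral R S] [IsIntegrallyClosed R]
    (I : Ideal R) (hI : I ≠ ⊤) :
    idealHeight I = idealHeight (I.map (algebraMap R S)) :=
  statement0_general hinj I
end

section
/- Let R be a graded algebra over a field with R₀ = K, and M a graded R-module bounded below. If (a₁,…,aₙ) is a homogeneous M-regular sequence (with each aᵢ of positive degree), then for every permutation π of {1,…,n}, the sequence (a_{π(1)},…,a_{π(n)}) is also an M-regular sequence. -/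
/-!
Mathlib's `IsWeaklyRegular.prototype_perm` reduces permuting a weakly regular sequence to a
graded Nakayama lemma: if `N ⊆ M` is generated by homogeneous multiples, `a` is homogeneous of
degree `e > 0` and `P ⊆ M ⧸ N` satisfies `P ⊆ a • P`, then `P = 0`. Writing a lift `y` of an
element of `P` as `a • y' + n` with `n ∈ N` and `y'` again lifting an element of `P`, the degree
`i` component of `y` is `a` times the degree `i - e` component of `y'` modulo the homogeneous `N`,
so by induction on the degree, which is bounded below, every component of `y` lies in `N`.
-/
section

open DirectSum Pointwise

variable {R M σA σM : Type*} [CommRing R] [AddCommGroup M] [Module R M]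
  [SetLike σA R] [SetLike σM M] [AddSubmonoidClass σM M]
  {𝒜 : ℤ → σA} {ℳ : ℤ → σM} [SetLike.GradedSMul 𝒜 ℳ] [Decomposition ℳ]

theorem DirectSum.coe_decompose_smul_of_mem {r : R} {e : ℤ} (hr : r ∈ 𝒜 e) (m : M) (i : ℤ) :
    (decompose ℳ (r • m) i : M) = r • (decompose ℳ m (i - e) : M) := by
  induction m using Decomposition.inductionOn ℳ with
  | zero => simp
  | @homogeneous j m =>
    have hrm : r • (m : M) ∈ ℳ (e + j) := SetLike.GradedSMul.smul_mem hr m.2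
    by_cases h : i = e + j
    · rw [h, decompose_of_mem_same ℳ hrm, add_sub_cancel_left, decompose_coe, of_eq_same]
    · rw [decompose_of_mem_ne ℳ hrm (Ne.symm h), decompose_of_mem_ne ℳ m.2 (by omega),
        smul_zero]
  | add x y hx hy =>
    simp only [smul_add, decompose_add, DirectSum.add_apply, AddMemClass.coe_add, hx, hy]

namespace Submodule

theorem isHomogeneous_bot : (⊥ : Submodule R M).IsHomogeneous ℳ := fun i m hm => by
  simp [(mem_bot R).1 hm]

theorem IsHomogeneous.sup {P Q : Submodule R M} (hP : P.IsHomogeneous ℳ)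
    (hQ : Q.IsHomogeneous ℳ) : (P ⊔ Q).IsHomogeneous ℳ := by
  intro i x hx
  obtain ⟨p, hp, q, hq, rfl⟩ := mem_sup.mp hx
  rw [decompose_add, DirectSum.add_apply, AddMemClass.coe_add]
  exact add_mem_sup (hP i hp) (hQ i hq)

theorem isHomogeneous_smul_top {r : R} {e : ℤ} (hr : r ∈ 𝒜 e) :
    (r • ⊤ : Submodule R M).IsHomogeneous ℳ := by
  intro i x hx
  obtain ⟨m, -, rfl⟩ := (mem_smul_pointwise_iff_exists _ _ _).mp hx
  rw [coe_decompose_smul_of_mem hr]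
  exact smul_mem_pointwise_smul _ _ _ trivial

theorem isHomogeneous_ofList_smul_top {rs : List R} (hrs : ∀ r ∈ rs, ∃ e, r ∈ 𝒜 e) :
    (Ideal.ofList rs • ⊤ : Submodule R M).IsHomogeneous ℳ := by
  induction rs with
  | nil => simpa using isHomogeneous_bot
  | cons r rs ih =>
    obtain ⟨e, he⟩ := hrs r List.mem_cons_self
    rw [Ideal.ofList_cons_smul]
    exact (isHomogeneous_smul_top he).sup (ih fun s hs => hrs s (List.mem_cons_of_mem r hs))

theorem eq_bot_of_le_smul_of_isHomogeneous {b : ℤ} (hbdd : ∀ i < b, ∀ m ∈ ℳ i, m = 0)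
    {N : Submodule R M} (hN : N.IsHomogeneous ℳ) {a : R} {e : ℤ} (ha : a ∈ 𝒜 e) (he : 0 < e)
    {P : Submodule R (M ⧸ N)} (hP : P ≤ a • P) : P = ⊥ := by
  have hlow : ∀ k : ℕ, ∀ i < b + k, ∀ y : M, N.mkQ y ∈ P → (decompose ℳ y i : M) ∈ N := by
    intro k
    induction k with
    | zero =>
      intro i hi y _
      rw [hbdd i (by simpa using hi) _ (decompose ℳ y i).2]
      exact N.zero_mem
    | succ k ih =>
      intro i hi y hy
      obtain ⟨z, hz, hyz⟩ := (mem_smul_pointwise_iff_exists _ _ _).mp (hP hy)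
      obtain ⟨y', rfl⟩ := N.mkQ_surjective z
      have hrest : y - a • y' ∈ N := by
        rw [← N.ker_mkQ, LinearMap.mem_ker, map_sub, map_smul, hyz, sub_self]
      have hsplit : (decompose ℳ y i : M)
          = a • (decompose ℳ y' (i - e) : M) + decompose ℳ (y - a • y') i := by
        rw [← coe_decompose_smul_of_mem ha, ← AddMemClass.coe_add, ← DirectSum.add_apply,
          ← decompose_add, add_sub_cancel]
      rw [hsplit]
      exact add_mem (N.smul_mem a (ih _ (by omega) y' hz)) (hN i hrest)
  rw [eq_bot_iff]
  intro x hx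
  obtain ⟨y, rfl⟩ := N.mkQ_surjective x
  rw [mem_bot, mkQ_apply, Quotient.mk_eq_zero, hN.mem_iff]
  exact fun i => hlow (i - b + 1).toNat i (by omega) y hx

end Submodule

namespace RingTheory.Sequence

theorem IsRegular.of_perm_of_homogeneous_of_pos_degree {b : ℤ}
    (hbdd : ∀ i < b, ∀ m ∈ ℳ i, m = 0) {rs rs' : List R} (h : IsRegular M rs)
    (hperm : rs.Perm rs') (hrs : ∀ r ∈ rs, ∃ e, 0 < e ∧ r ∈ 𝒜 e) : IsRegular M rs' := by
  refine ⟨h.toIsWeaklyRegular.prototype_perm hperm fun a c rs'' hsub hK => ?_, ?_⟩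
  · obtain ⟨e, he, hae⟩ := hrs a (hsub.subset List.mem_cons_self)
    have hN : (Ideal.ofList rs'' • ⊤ : Submodule R M).IsHomogeneous ℳ :=
      Submodule.isHomogeneous_ofList_smul_top fun r hr =>
        (hrs r (hsub.subset (by simp [hr]))).imp fun _ => And.right
    exact Submodule.eq_bot_of_le_smul_of_isHomogeneous hbdd hN hae he hK.le
  · have hideal : Ideal.ofList rs = Ideal.ofList rs' :=
      congrArg Ideal.span (Set.ext fun _ => hperm.mem_iff)
    exact hideal ▸ h.top_ne_smul

end RingTheory.Sequence

end

theorem statement2_general {K R M : Type*} [Field K] [CommRing R] [Algebra K R]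
    [AddCommGroup M] [Module R M] [Module K M]
    (𝒜 : ℤ → Submodule K R)
    (ℳ : ℤ → Submodule K M) [SetLike.GradedSMul 𝒜 ℳ] [DirectSum.Decomposition ℳ]
    (hbdd : ∃ b : ℤ, ∀ i : ℤ, i < b → ℳ i = ⊥)
    {n : ℕ} (a : Fin n → R) (d : Fin n → ℤ) (hd : ∀ i, 0 < d i)
    (ha : ∀ i, a i ∈ 𝒜 (d i))
    (hreg : RingTheory.Sequence.IsRegular M (List.ofFn a))
    (π : Equiv.Perm (Fin n)) :
    RingTheory.Sequence.IsRegular M (List.ofFn (a ∘ π)) := by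
  obtain ⟨b, hb⟩ := hbdd
  have hbdd' : ∀ i < b, ∀ m ∈ ℳ i, m = 0 := fun i hi m hm => by
    rwa [hb i hi, Submodule.mem_bot] at hm
  have hdeg : ∀ r ∈ List.ofFn a, ∃ e, 0 < e ∧ r ∈ 𝒜 e := fun r hr => by
    obtain ⟨i, rfl⟩ := List.mem_ofFn.mp hr
    exact ⟨d i, hd i, ha i⟩
  exact hreg.of_perm_of_homogeneous_of_pos_degree hbdd'
    (Equiv.Perm.ofFn_comp_perm π a).symm hdeg

/-- Let `R` be a graded algebra over a field `K` with `R₀ = K`, graded by `ℤ` with no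
negative components (so effectively `ℕ`-graded), and let `M` be a graded `R`-module that is
bounded below.  If `(a₁, …, aₙ)` is a homogeneous `M`-regular sequence (each `aᵢ` of
positive degree), then every permutation of it is again an `M`-regular sequence. -/
theorem statement2 {K R M : Type*} [Field K] [CommRing R] [Algebra K R]
    [AddCommGroup M] [Module R M] [Module K M] [IsScalarTower K R M]
    (𝒜 : ℤ → Submodule K R) [GradedAlgebra 𝒜] (h0 : 𝒜 0 = 1)
    (hneg : ∀ i : ℤ, i < 0 → 𝒜 i = ⊥)
    (ℳ : ℤ → Submodule K M) [SetLike.GradedSMul 𝒜 ℳ] [DirectSum.Decomposition ℳ]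
    (hbdd : ∃ b : ℤ, ∀ i : ℤ, i < b → ℳ i = ⊥)
    {n : ℕ} (a : Fin n → R) (d : Fin n → ℤ) (hd : ∀ i, 0 < d i)
    (ha : ∀ i, a i ∈ 𝒜 (d i))
    (hreg : RingTheory.Sequence.IsRegular M (List.ofFn a))
    (π : Equiv.Perm (Fin n)) :
    RingTheory.Sequence.IsRegular M (List.ofFn (a ∘ π)) :=
  statement2_general 𝒜 ℳ hbdd a d hd ha hreg π
end

section
/- Let G be a group acting on a polynomial ring K[V] by graded K-algebra automorphisms, and let a₁, a₂ ∈ K[V]^G be homogeneous invariants of positive degree that are coprime in K[V]. Then a₁, a₂ form a regular sequence in the invariant ring K[V]^G. -/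
/-- The subalgebra of `G`-invariant elements of a `K`-algebra `P` with a `G`-action by
`K`-algebra automorphisms. -/
def invariantSubalgebra (G : Type*) [Group G] {K P : Type*} [CommSemiring K] [CommSemiring P]
    [Algebra K P] [MulSemiringAction G P] [SMulCommClass G K P] : Subalgebra K P where
  carrier := {x | ∀ σ : G, σ • x = x}
  mul_mem' := fun {x y} hx hy σ => by rw [smul_mul', hx σ, hy σ]
  add_mem' := fun {x y} hx hy σ => by rw [smul_add, hx σ, hy σ]
  one_mem' := fun σ => smul_one σ
  zero_mem' := fun σ => smul_zero σ
  algebraMap_mem' := fun c σ => by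
    rw [Algebra.algebraMap_eq_smul_one, smul_comm, smul_one]

/-! The pair `a₁, a₂` is regular in `R = K[V]^G` once `a₁` is a nonzerodivisor, `a₂` is a
nonzerodivisor modulo `a₁ R`, and `(a₁, a₂) ≠ R`. The middle condition is the heart of the
matter: if `a₂ x = a₁ c` in `R`, coprimality in the UFD `K[V]` gives `x = a₁ q` there, and
`q` is invariant because `a₁` is and `K[V]` is a domain. Properness holds because
homogeneous elements of positive degree have zero constant term. -/

theorem RingTheory.Sequence.isRegular_pair_iff {R : Type*} [CommRing R] (a b : R) :
    IsRegular R [a, b] ↔ IsSMulRegular R a ∧ IsSMulRegular (R ⧸ Ideal.span {a}) b ∧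
      Ideal.span {a, b} ≠ ⊤ := by
  have hspan : Ideal.ofList [a] • (⊤ : Ideal R) = Ideal.span {a} := by
    rw [Ideal.ofList_singleton, smul_eq_mul, Ideal.mul_top]
  have hpair : Ideal.ofList [a, b] • (⊤ : Ideal R) = Ideal.span {a, b} := by
    rw [Ideal.ofList_cons, Ideal.ofList_singleton, smul_eq_mul, Ideal.mul_top,
      Ideal.span_insert]
  rw [isRegular_iff, show [a, b] = [a] ++ [b] from rfl, isWeaklyRegular_append_iff,
    isWeaklyRegular_singleton_iff, isWeaklyRegular_singleton_iff, List.singleton_append,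
    hspan, hpair, ne_comm, and_assoc]

theorem MvPolynomial.IsHomogeneous.constantCoeff_eq_zero {σ R : Type*} [CommSemiring R]
    {φ : MvPolynomial σ R} {n : ℕ} (hφ : φ.IsHomogeneous n) (hn : n ≠ 0) :
    constantCoeff φ = 0 :=
  hφ.coeff_eq_zero (by simpa using hn.symm)

section Invariants

variable {G K P : Type*} [Group G] [CommRing K] [CommRing P] [Algebra K P]
  [MulSemiringAction G P] [SMulCommClass G K P]

theorem mem_invariantSubalgebra_of_mul_mem [IsDomain P] {a q : P}
    (ha : a ∈ invariantSubalgebra G (K := K)) (ha₀ : a ≠ 0)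
    (haq : a * q ∈ invariantSubalgebra G (K := K)) : q ∈ invariantSubalgebra G (K := K) :=
  fun σ => mul_left_cancel₀ ha₀ <| by rw [← ha σ, ← smul_mul', haq σ, ha σ]

theorem isSMulRegular_quotient_span_invariant_of_isRelPrime [IsDomain P]
    [DecompositionMonoid P] {a b : invariantSubalgebra G (K := K) (P := P)}
    (ha₀ : (a : P) ≠ 0) (hab : IsRelPrime (a : P) b) :
    IsSMulRegular (invariantSubalgebra G (K := K) (P := P) ⧸ Ideal.span {a}) b := by
  refine (isSMulRegular_quotient_iff_mem_of_smul_mem _ _).2 fun x hx => ?_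
  obtain ⟨c, hc⟩ := Ideal.mem_span_singleton'.1 hx
  obtain ⟨q, hq⟩ : (a : P) ∣ x := hab.dvd_of_dvd_mul_left ⟨c, by
    simpa [mul_comm] using congrArg Subtype.val hc.symm⟩
  have hqx : a * q ∈ invariantSubalgebra G (K := K) := hq ▸ x.2
  exact Ideal.mem_span_singleton.2
    ⟨⟨q, mem_invariantSubalgebra_of_mul_mem a.2 ha₀ hqx⟩, Subtype.ext hq⟩

end Invariants

set_option synthInstance.maxHeartbeats 1000000 in
theorem statement9_general {K G : Type*} [Field K] [Group G] {n : ℕ}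
    [MulSemiringAction G (MvPolynomial (Fin n) K)]
    [SMulCommClass G K (MvPolynomial (Fin n) K)]
    (a₁ a₂ : MvPolynomial (Fin n) K) (d₁ d₂ : ℕ) (hd₁ : 0 < d₁) (hd₂ : 0 < d₂)
    (hh₁ : a₁.IsHomogeneous d₁) (hh₂ : a₂.IsHomogeneous d₂)
    (hi₁ : a₁ ∈ invariantSubalgebra G (K := K)) (hi₂ : a₂ ∈ invariantSubalgebra G (K := K))
    (hcop : IsRelPrime a₁ a₂) :
    RingTheory.Sequence.IsRegular (↥(invariantSubalgebra G (K := K) (P := MvPolynomial (Fin n) K)))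
      [(⟨a₁, hi₁⟩ : invariantSubalgebra G), (⟨a₂, hi₂⟩ : invariantSubalgebra G)] := by
  have hc₁ := hh₁.constantCoeff_eq_zero hd₁.ne'
  have hc₂ := hh₂.constantCoeff_eq_zero hd₂.ne'
  have ha₁ : a₁ ≠ 0 := by
    rintro rfl
    simpa [hc₂] using (isRelPrime_zero_left.1 hcop).map MvPolynomial.constantCoeff
  refine (RingTheory.Sequence.isRegular_pair_iff _ _).2 ⟨?_, ?_, ?_⟩
  · exact (IsRegular.of_ne_zero fun h => ha₁ (congrArg Subtype.val h)).left.isSMulRegular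
  · exact isSMulRegular_quotient_span_invariant_of_isRelPrime
      (a := ⟨a₁, hi₁⟩) (b := ⟨a₂, hi₂⟩) ha₁ hcop
  · refine ne_top_of_le_ne_top (RingHom.ker_ne_top
      (MvPolynomial.constantCoeff.comp (invariantSubalgebra G).val.toRingHom)) ?_
    simp [Ideal.span_le, Set.insert_subset_iff, hc₁, hc₂]

set_option synthInstance.maxHeartbeats 1000000 in
/-- Let `G` act on a polynomial ring `K[V]` by graded `K`-algebra automorphisms, and let
`a₁, a₂ ∈ K[V]^G` be homogeneous invariants of positive degree which are coprime in `K[V]`.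
Then `a₁, a₂` is a regular sequence in the invariant ring `K[V]^G`. -/
theorem statement9 {K G : Type*} [Field K] [Group G] {n : ℕ}
    [MulSemiringAction G (MvPolynomial (Fin n) K)]
    [SMulCommClass G K (MvPolynomial (Fin n) K)]
    (hgraded : ∀ (σ : G) (d : ℕ) (f : MvPolynomial (Fin n) K),
      f.IsHomogeneous d → (σ • f).IsHomogeneous d)
    (a₁ a₂ : MvPolynomial (Fin n) K) (d₁ d₂ : ℕ) (hd₁ : 0 < d₁) (hd₂ : 0 < d₂)
    (hh₁ : a₁.IsHomogeneous d₁) (hh₂ : a₂.IsHomogeneous d₂)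
    (hi₁ : a₁ ∈ invariantSubalgebra G (K := K)) (hi₂ : a₂ ∈ invariantSubalgebra G (K := K))
    (hcop : IsRelPrime a₁ a₂) :
    RingTheory.Sequence.IsRegular (↥(invariantSubalgebra G (K := K) (P := MvPolynomial (Fin n) K)))
      [(⟨a₁, hi₁⟩ : invariantSubalgebra G), (⟨a₂, hi₂⟩ : invariantSubalgebra G)] :=
  statement9_general a₁ a₂ d₁ d₂ hd₁ hd₂ hh₁ hh₂ hi₁ hi₂ hcop
end

section
/- Frobenius invariants isomorphism: Let G act linearly on P = K[X₁,…,Xₙ,Y₁,…,Y_m] over a field K of characteristic p > 0, where the action on the X-variables is the p-th Frobenius twist of some linear G-action, i.e. there is a second polynomial ring Q = K[Z₁,…,Zₙ,Y₁,…,Y_m] with G-action satisfying σ·Zⱼ = Σᵢ a_{ij,σ}^p Zᵢ whenever σ·Xⱼ = Σᵢ a_{ij,σ} Xᵢ (and the same action on the Y's). Then the K-algebra homomorphism φ : Q → P defined by Zᵢ ↦ Xᵢ^p, Yᵢ ↦ Yᵢ restricts to an isomorphism of invariant rings Q^G ≅ P^G ∩ K[X₁^p,…,Xₙ^p,Y₁,…,Y_m].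 -/
/-
Since `(∑ᵢ aᵢ Xᵢ)^p = ∑ᵢ aᵢ^p Xᵢ^p` in characteristic `p`, the substitution `φ` intertwines the
twisted action on `Q` with the action on `P`. It is injective because it sends distinct monomials
to distinct monomials, and an injective equivariant map carries the fixed points of the source
exactly onto the fixed points of the target lying in its range.
-/

open MvPolynomial

/-- The `K`-algebra map `φ : Q → P` between copies of `K[Z₁,…,Zₙ,Y₁,…,Y_m]` and
`K[X₁,…,Xₙ,Y₁,…,Y_m]`, sending `Zᵢ ↦ Xᵢ^p` and `Yᵢ ↦ Yᵢ`. -/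
noncomputable def frobeniusSubst (K : Type*) [CommSemiring K] (p n m : ℕ) :
    MvPolynomial (Fin n ⊕ Fin m) K →ₐ[K] MvPolynomial (Fin n ⊕ Fin m) K :=
  MvPolynomial.aeval fun s => match s with
    | Sum.inl i => (X (Sum.inl i) : MvPolynomial (Fin n ⊕ Fin m) K) ^ p
    | Sum.inr i => X (Sum.inr i)

section ExponentScaling

variable {σ R : Type*} [CommSemiring R] (e : σ → ℕ)

theorem aeval_X_pow_monomial (d : σ →₀ ℕ) (r : R) :
    aeval (fun s => (X s : MvPolynomial σ R) ^ e s) (monomial d r) = monomial (e • d) r := by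
  have support_subset : (e • d).support ⊆ d.support := fun s hs => by simp_all
  rw [aeval_monomial, monomial_eq, algebraMap_eq,
    Finsupp.prod_of_support_subset _ support_subset _ fun _ _ => pow_zero _]
  simp [Finsupp.prod, pow_mul]

variable {e}

theorem coeff_aeval_X_pow_smul (he : ∀ s, e s ≠ 0) (f : MvPolynomial σ R) (d : σ →₀ ℕ) :
    (aeval (fun s => (X s : MvPolynomial σ R) ^ e s) f).coeff (e • d) = f.coeff d := by
  classical
  have smul_inj : Function.Injective (e • · : (σ →₀ ℕ) → σ →₀ ℕ) := fun u v huv =>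
    Finsupp.ext fun s => Nat.eq_of_mul_eq_mul_left (Nat.pos_of_ne_zero (he s))
      (DFunLike.congr_fun huv s)
  induction f using induction_on' with
  | monomial u r =>
    simp only [aeval_X_pow_monomial, coeff_monomial, smul_inj.eq_iff]
  | add f g hf hg => rw [map_add, coeff_add, coeff_add, hf, hg]

theorem aeval_X_pow_injective (he : ∀ s, e s ≠ 0) :
    Function.Injective
      (aeval (fun s => X s ^ e s) : MvPolynomial σ R →ₐ[R] MvPolynomial σ R) := fun f g hfg => by
  ext d
  rw [← coeff_aeval_X_pow_smul he, hfg, coeff_aeval_X_pow_smul he]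

end ExponentScaling

theorem Set.image_setOf_forall_eq_of_injective {ι α β : Type*} {f : α → β}
    (hf : Function.Injective f) (u : ι → α → α) (v : ι → β → β)
    (hfuv : ∀ i x, v i (f x) = f (u i x)) :
    f '' {x | ∀ i, u i x = x} = {y | ∀ i, v i y = y} ∩ Set.range f := by
  ext y
  constructor
  · rintro ⟨x, hx, rfl⟩
    exact ⟨fun i => by rw [hfuv, hx i], x, rfl⟩
  · rintro ⟨hy, x, rfl⟩
    exact ⟨x, fun i => hf (by rw [← hfuv, hy i]), rfl⟩

section frobeniusSubst

variable {K : Type*} [CommSemiring K] {p n m : ℕ}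

theorem frobeniusSubst_eq_aeval :
    frobeniusSubst K p n m = aeval fun s => X s ^ Sum.elim (fun _ => p) (fun _ => 1) s := by
  unfold frobeniusSubst
  congr 1
  funext s
  cases s <;> simp

theorem frobeniusSubst_injective (hp : p ≠ 0) : Function.Injective (frobeniusSubst K p n m) := by
  rw [frobeniusSubst_eq_aeval]
  exact aeval_X_pow_injective fun s => by cases s <;> simp [hp]

theorem frobeniusSubst_X_inl (i : Fin n) :
    frobeniusSubst K p n m (X (Sum.inl i)) = X (Sum.inl i) ^ p := by
  simp [frobeniusSubst]

theorem frobeniusSubst_X_inr (i : Fin m) :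
    frobeniusSubst K p n m (X (Sum.inr i)) = X (Sum.inr i) := by
  simp [frobeniusSubst]

theorem comp_frobeniusSubst_eq [ExpChar K p]
    (ψP ψQ : MvPolynomial (Fin n ⊕ Fin m) K →ₐ[K] MvPolynomial (Fin n ⊕ Fin m) K)
    (a : Matrix (Fin n) (Fin n) K) (b : Matrix (Fin m) (Fin m) K)
    (hP1 : ∀ j, ψP (X (Sum.inl j)) = ∑ i, C (a i j) * X (Sum.inl i))
    (hP2 : ∀ j, ψP (X (Sum.inr j)) = ∑ i, C (b i j) * X (Sum.inr i))
    (hQ1 : ∀ j, ψQ (X (Sum.inl j)) = ∑ i, C (a i j ^ p) * X (Sum.inl i))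
    (hQ2 : ∀ j, ψQ (X (Sum.inr j)) = ∑ i, C (b i j) * X (Sum.inr i)) :
    ψP.comp (frobeniusSubst K p n m) = (frobeniusSubst K p n m).comp ψQ := by
  refine algHom_ext fun s => ?_
  cases s with
  | inl j =>
    simp only [AlgHom.comp_apply, frobeniusSubst_X_inl, map_pow, hP1, hQ1, sum_pow_char, map_sum,
      map_mul, algHom_C, algebraMap_eq, mul_pow]
  | inr j =>
    simp only [AlgHom.comp_apply, frobeniusSubst_X_inr, hP2, hQ2, map_sum, map_mul, algHom_C,
      algebraMap_eq]

end frobeniusSubst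

/-- Frobenius invariants isomorphism.  Let `G` act linearly on
`P = K[X₁,…,Xₙ,Y₁,…,Y_m]` (char `K = p > 0`) and on `Q = K[Z₁,…,Zₙ,Y₁,…,Y_m]` by the
`p`-th Frobenius twist of the action on the `X`-variables (same action on the `Y`'s).
Then `φ : Q → P`, `Zᵢ ↦ Xᵢ^p`, `Yᵢ ↦ Yᵢ` is injective and maps the invariant ring `Q^G`
onto `P^G ∩ K[X₁^p,…,Xₙ^p,Y₁,…,Y_m]` (the latter being `P^G ∩ range φ`). -/
theorem statement18 {K G : Type*} [Field K] [Group G] (p : ℕ) [Fact p.Prime] [CharP K p]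
    {n m : ℕ}
    (ρP ρQ : G →* (MvPolynomial (Fin n ⊕ Fin m) K ≃ₐ[K] MvPolynomial (Fin n ⊕ Fin m) K))
    (a : G → Matrix (Fin n) (Fin n) K) (b : G → Matrix (Fin m) (Fin m) K)
    (hP1 : ∀ (σ : G) (j : Fin n),
      ρP σ (X (Sum.inl j)) = ∑ i : Fin n, C (a σ i j) * X (Sum.inl i))
    (hP2 : ∀ (σ : G) (j : Fin m),
      ρP σ (X (Sum.inr j)) = ∑ i : Fin m, C (b σ i j) * X (Sum.inr i))
    (hQ1 : ∀ (σ : G) (j : Fin n),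
      ρQ σ (X (Sum.inl j)) = ∑ i : Fin n, C (a σ i j ^ p) * X (Sum.inl i))
    (hQ2 : ∀ (σ : G) (j : Fin m),
      ρQ σ (X (Sum.inr j)) = ∑ i : Fin m, C (b σ i j) * X (Sum.inr i)) :
    Function.Injective (frobeniusSubst K p n m) ∧
      (frobeniusSubst K p n m) '' {q | ∀ σ : G, ρQ σ q = q} =
        {f | ∀ σ : G, ρP σ f = f} ∩ Set.range (frobeniusSubst K p n m) := by
  have hφ := frobeniusSubst_injective (K := K) (n := n) (m := m) (Fact.out : p.Prime).ne_zero
  refine ⟨hφ, Set.image_setOf_forall_eq_of_injective hφ _ _ fun σ q => ?_⟩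
  exact AlgHom.congr_fun (comp_frobeniusSubst_eq (ρP σ).toAlgHom (ρQ σ).toAlgHom (a σ) (b σ)
    (hP1 σ) (hP2 σ) (hQ1 σ) (hQ2 σ)) q
end
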